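/- Let (L₁, …, L_{k−1}, V_{G_k}; w₁, …, w_k) be a k-level vertex hierarchy on the weighted graph G = (V, w₁). Then for all s, t ∈ V: dist_G(s,t) = min( A , B ), where A = ⨅_{x ∈ Anc(s) ∩ Anc(t)} ( d(s,x) + d(t,x) ) and B = ⨅_{x ∈ Anc(s) ∩ V_{G_k}, y ∈ Anc(t) ∩ V_{G_k}} ( d(s,x) + dist_{w_k}(x,y) + d(t,y) ), with infima in ℕ∞ over empty index sets equal to ⊤. -/

import Mathlib

namespace ISLabel

variable {V : Type*}

/-- Two vertices are adjacent in the weighted graph `w` when they are distinct and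
joined by an edge of finite weight. -/
def Adj (w : V → V → ℕ∞) (u v : V) : Prop := u ≠ v ∧ w u v < ⊤

/-- `p` is a walk from `u` to `v` in the weighted graph `w`: a nonempty list of
vertices starting at `u`, ending at `v`, with consecutive vertices adjacent. -/
def IsWalk (w : V → V → ℕ∞) (u v : V) (p : List V) : Prop :=
  p ≠ [] ∧ p.head? = some u ∧ p.getLast? = some v ∧ p.Chain' (Adj w)

/-- The length of a list of vertices: the sum of `f` over consecutive pairs. -/
def pathLen (f : V → V → ℕ∞) (p : List V) : ℕ∞ :=
  ((p.zip p.tail).map fun e => f e.1 e.2).sum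

/-- The distance from `u` to `v` in `w`: the infimum of the lengths of all walks
from `u` to `v` (`⊤` if there is no such walk). -/
noncomputable def wdist (w : V → V → ℕ∞) (u v : V) : ℕ∞ :=
  ⨅ p : {p : List V // IsWalk w u v p}, pathLen w p.1

/-- `I` is an independent set in `w`. -/
def IsIndep (w : V → V → ℕ∞) (I : Set V) : Prop :=
  ∀ u ∈ I, ∀ v ∈ I, ¬ Adj w u v

/-- `w` is a weighted undirected graph: symmetric, and every off-diagonal value is
either `⊤` (no edge) or a weight `≥ 1`. -/
def IsWGraph (w : V → V → ℕ∞) : Prop :=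
  (∀ u v, w u v = w v u) ∧ ∀ u v, u ≠ v → 1 ≤ w u v

/-- `w` is supported on `S`: all weights touching a vertex outside `S` are `⊤`. -/
def SupportedOn (w : V → V → ℕ∞) (S : Set V) : Prop :=
  ∀ u v, u ∉ S ∨ v ∉ S → w u v = ⊤

/-- `VsetOf L i` is the vertex set `V_i = V ∖ (L₁ ∪ … ∪ L_{i-1})`. -/
def VsetOf (L : ℕ → Set V) (i : ℕ) : Set V := {v | ∀ j, 1 ≤ j → j < i → v ∉ L j}

/-- A `k`-level vertex hierarchy (`k ≥ 2`) on the weighted graph `w 1`: like a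
vertex hierarchy of height `k`, except that the top vertex set
`V_{G_k} = VsetOf L k` is not required to be independent in `w k`. -/
structure KLevelHierarchy (V : Type*) (k : ℕ) where
  L : ℕ → Set V
  w : ℕ → V → V → ℕ∞
  two_le : 2 ≤ k
  wgraph : ∀ i, 1 ≤ i → i ≤ k → IsWGraph (w i)
  disj : ∀ i j, 1 ≤ i → i < k → 1 ≤ j → j < k → i ≠ j → ∀ v, v ∈ L i → v ∉ L j
  supported : ∀ i, 1 ≤ i → i ≤ k → SupportedOn (w i) (VsetOf L i)
  aug : ∀ i, 2 ≤ i → i ≤ k → ∀ u v : V, u ≠ v → u ∈ VsetOf L i → v ∈ VsetOf L i →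
    w i u v = min (w (i - 1) u v) (⨅ x ∈ L (i - 1), w (i - 1) u x + w (i - 1) x v)
  indep : ∀ i, 1 ≤ i → i < k → IsIndep (w i) (L i)

/-- The level of a vertex: the unique `i < k` with `v ∈ L i`, and `k` for vertices
of the top vertex set `V_{G_k}`. -/
noncomputable def klevel {k : ℕ} (H : KLevelHierarchy V k) (v : V) : ℕ :=
  sInf {i | (1 ≤ i ∧ i < k ∧ v ∈ H.L i) ∨ i = k}

/-- One step of an ascending sequence in a `k`-level vertex hierarchy. -/
def kAscStep {k : ℕ} (H : KLevelHierarchy V k) (a b : V) : Prop :=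
  klevel H a < klevel H b ∧ Adj (H.w (klevel H a)) a b

/-- `p` is an ascending sequence from `v` to `u`. -/
def kIsAscending {k : ℕ} (H : KLevelHierarchy V k) (v u : V) (p : List V) : Prop :=
  p ≠ [] ∧ p.head? = some v ∧ p.getLast? = some u ∧ p.Chain' (kAscStep H)

/-- The set of ancestors of `v`. -/
def kAnc {k : ℕ} (H : KLevelHierarchy V k) (v : V) : Set V :=
  {u | ∃ p, kIsAscending H v u p}

/-- `d(v,u)` in a `k`-level vertex hierarchy. -/
noncomputable def kAncDist {k : ℕ} (H : KLevelHierarchy V k) (v u : V) : ℕ∞ :=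
  ⨅ p : {p : List V // kIsAscending H v u p},
    pathLen (fun a b => H.w (klevel H a) a b) p.1

/-!
`dist_G(s,t) ≤ min(A, B)` because every ascending step and every edge of `G_i` is realised
by a walk in `G` of no greater length. Conversely, write `queryDist u v` for `min(A, B)` and
show `queryDist u v ≤ dist_{w_i}(u,v)` for `u, v ∈ V_i` by downward induction on `i`, the case
`i = k` being the `B`-term with `x = u`, `y = v`. A walk in `G_i` starting (or, by symmetry,
ending) in the independent set `L_i` begins with an ascending step, along which `queryDist`
grows by at most the weight of that step. A walk in `G_i` between vertices of `V_{i+1}` is no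
shorter than one in `G_{i+1}`, since each visit to `L_i` can be bypassed by an augmenting edge.
-/

/-- `IsWalk w` and `kIsAscending H` unfold to `IsChainBetween (Adj w)` and
`IsChainBetween (kAscStep H)`. -/
def IsChainBetween (R : V → V → Prop) (u v : V) (p : List V) : Prop :=
  p ≠ [] ∧ p.head? = some u ∧ p.getLast? = some v ∧ p.IsChain R

namespace IsChainBetween

variable {R : V → V → Prop}

theorem singleton (R : V → V → Prop) (u : V) : IsChainBetween R u u [u] :=
  ⟨List.cons_ne_nil u [], rfl, rfl, List.isChain_singleton u⟩

theorem eq_of_singleton {u v a : V} (h : IsChainBetween R u v [a]) : a = u ∧ a = v := by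
  obtain ⟨-, hu, hv, -⟩ := h
  simp_all

theorem cons {a b v : V} {p : List V} (hab : R a b) (hp : IsChainBetween R b v p) :
    IsChainBetween R a v (a :: p) := by
  obtain ⟨hne, hb, hv, hc⟩ := hp
  obtain ⟨c, q, rfl⟩ := List.exists_cons_of_ne_nil hne
  obtain rfl : c = b := by simpa using hb
  exact ⟨List.cons_ne_nil _ _, rfl, by rwa [List.getLast?_cons_cons],
    List.isChain_cons_cons.mpr ⟨hab, hc⟩⟩

theorem of_cons_cons {u v a b : V} {l : List V} (h : IsChainBetween R u v (a :: b :: l)) :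
    a = u ∧ R a b ∧ IsChainBetween R b v (b :: l) := by
  obtain ⟨-, hu, hv, hc⟩ := h
  rw [List.getLast?_cons_cons] at hv
  rw [List.isChain_cons_cons] at hc
  exact ⟨by simpa using hu, hc.1, List.cons_ne_nil _ _, rfl, hv, hc.2⟩

theorem append {u m v : V} {p q : List V} (hp : IsChainBetween R u m p)
    (hq : IsChainBetween R m v q) : IsChainBetween R u v (p ++ q.tail) := by
  obtain ⟨hpne, hpu, hpm, hpc⟩ := hp
  obtain ⟨hqne, hqm, hqv, hqc⟩ := hq
  obtain ⟨c, q, rfl⟩ := List.exists_cons_of_ne_nil hqne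
  obtain rfl : c = m := by simpa using hqm
  refine ⟨by simp [hpne], by rwa [List.head?_append_of_ne_nil _ hpne], ?_, ?_⟩
  · cases q with
    | nil => simpa [hpm] using hqv
    | cons d q => rwa [List.tail_cons, List.getLast?_append_cons, ← List.getLast?_cons_cons]
  · refine hpc.append (List.isChain_cons.mp hqc).2 fun x hx y hy => ?_
    obtain rfl : c = x := by simpa [hpm] using hx
    exact (List.isChain_cons.mp hqc).1 y hy

theorem reverse {u v : V} {p : List V} (hR : ∀ a b, R a b → R b a)
    (h : IsChainBetween R u v p) : IsChainBetween R v u p.reverse := by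
  obtain ⟨hne, hu, hv, hc⟩ := h
  exact ⟨by simpa using hne, by simpa using hv, by simpa using hu,
    List.isChain_reverse.mpr (hc.imp hR)⟩

end IsChainBetween

section PathLength

variable (f : V → V → ℕ∞)

@[simp] theorem pathLen_singleton (a : V) : pathLen f [a] = 0 := rfl

theorem pathLen_cons_cons (a b : V) (l : List V) :
    pathLen f (a :: b :: l) = f a b + pathLen f (b :: l) := by
  simp [pathLen]

theorem pathLen_cons_of_head?_eq {a b : V} {p : List V} (hp : p.head? = some b) :
    pathLen f (a :: p) = f a b + pathLen f p := by
  obtain ⟨c, q, rfl⟩ := List.exists_cons_of_ne_nil (l := p) (by rintro rfl; simp at hp)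
  obtain rfl : c = b := by simpa using hp
  exact pathLen_cons_cons f a c q

theorem pathLen_append_tail :
    ∀ (p q : List V) {m : V}, p.getLast? = some m → q.head? = some m →
      pathLen f (p ++ q.tail) = pathLen f p + pathLen f q
  | [], _, _, hp, _ => by simp at hp
  | [a], q, m, hp, hq => by
      obtain ⟨c, q, rfl⟩ := List.exists_cons_of_ne_nil (l := q) (by rintro rfl; simp at hq)
      obtain rfl : a = m := by simpa using hp
      obtain rfl : c = a := by simpa using hq
      simp
  | a :: b :: p, q, m, hp, hq => by
      rw [List.getLast?_cons_cons] at hp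
      simp only [List.cons_append]
      rw [pathLen_cons_cons, pathLen_cons_cons, ← List.cons_append,
        pathLen_append_tail (b :: p) q hp hq, add_assoc]

theorem pathLen_reverse (hf : ∀ a b, f a b = f b a) :
    ∀ p : List V, pathLen f p.reverse = pathLen f p
  | [] => rfl
  | [_] => rfl
  | a :: b :: l => by
      have hab : pathLen f ((b :: l).reverse ++ [b, a].tail) =
          pathLen f (b :: l).reverse + pathLen f [b, a] :=
        pathLen_append_tail f _ _ (by simp) rfl
      simp only [List.tail_cons, ← List.reverse_cons] at hab
      rw [hab, pathLen_reverse hf (b :: l), pathLen_cons_cons, pathLen_cons_cons, hf,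
        pathLen_singleton, add_zero, add_comm]

end PathLength

section WeightedDistance

variable {w : V → V → ℕ∞}

theorem Adj.symm (hw : ∀ a b, w a b = w b a) {a b : V} (h : Adj w a b) : Adj w b a :=
  ⟨h.1.symm, hw a b ▸ h.2⟩

theorem IsWalk.reverse (hw : ∀ a b, w a b = w b a) {u v : V} {p : List V}
    (h : IsWalk w u v p) : IsWalk w v u p.reverse :=
  IsChainBetween.reverse (fun _ _ => Adj.symm hw) h

theorem wdist_le_pathLen {u v : V} {p : List V} (h : IsWalk w u v p) :
    wdist w u v ≤ pathLen w p :=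
  iInf_le (fun q : {p // IsWalk w u v p} => pathLen w q.1) ⟨p, h⟩

theorem le_wdist {u v : V} {c : ℕ∞} (h : ∀ p, IsWalk w u v p → c ≤ pathLen w p) :
    c ≤ wdist w u v :=
  le_iInf fun p => h p.1 p.2

@[simp] theorem wdist_self (v : V) : wdist w v v = 0 :=
  nonpos_iff_eq_zero.mp (wdist_le_pathLen (IsChainBetween.singleton _ v))

theorem wdist_le_weight (u v : V) : wdist w u v ≤ w u v := by
  obtain rfl | huv := eq_or_ne u v
  · simp
  obtain htop | hlt := eq_top_or_lt_top (w u v)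
  · simp [htop]
  have hwalk : IsWalk w u v [u, v] := (IsChainBetween.singleton _ v).cons ⟨huv, hlt⟩
  simpa [pathLen_cons_cons] using wdist_le_pathLen hwalk

theorem wdist_triangle (u m v : V) : wdist w u v ≤ wdist w u m + wdist w m v :=
  ENat.le_iInf_add_iInf fun p q =>
    (wdist_le_pathLen (IsChainBetween.append p.2 q.2)).trans_eq
      (pathLen_append_tail w p.1 q.1 p.2.2.2.1 q.2.2.1)

theorem wdist_comm (hw : ∀ a b, w a b = w b a) (u v : V) : wdist w u v = wdist w v u := by
  have key : ∀ a b, wdist w a b ≤ wdist w b a := fun a b =>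
    le_wdist fun p hp => (wdist_le_pathLen (hp.reverse hw)).trans_eq (pathLen_reverse w hw p)
  exact (key u v).antisymm (key v u)

theorem wdist_le_pathLen_of_chain {R : V → V → Prop} {f : V → V → ℕ∞}
    (hR : ∀ a b, R a b → wdist w a b ≤ f a b) :
    ∀ {u v : V} {p : List V}, IsChainBetween R u v p → wdist w u v ≤ pathLen f p
  | _, _, [], h => absurd rfl h.1
  | _, _, [_], h => by
      obtain ⟨rfl, rfl⟩ := h.eq_of_singleton
      simp
  | _, v, a :: b :: l, h => by
      obtain ⟨rfl, hab, h⟩ := h.of_cons_cons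
      calc wdist w a v ≤ wdist w a b + wdist w b v := wdist_triangle a b v
        _ ≤ f a b + pathLen f (b :: l) :=
          add_le_add (hR a b hab) (wdist_le_pathLen_of_chain hR h)
        _ = pathLen f (a :: b :: l) := (pathLen_cons_cons f a b l).symm

theorem wdist_le_wdist {w' : V → V → ℕ∞} (h : ∀ a b, Adj w' a b → wdist w a b ≤ w' a b)
    (u v : V) : wdist w u v ≤ wdist w' u v :=
  le_wdist fun _ hp => wdist_le_pathLen_of_chain h hp

end WeightedDistance

theorem mem_VsetOf_one (L : ℕ → Set V) (v : V) : v ∈ VsetOf L 1 :=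
  fun _ h1 h2 => absurd h1 (by omega)

theorem mem_VsetOf_succ {L : ℕ → Set V} {i : ℕ} {v : V} (hv : v ∈ VsetOf L i) (hL : v ∉ L i) :
    v ∈ VsetOf L (i + 1) := by
  intro j h1 h2
  obtain h | rfl := Nat.lt_succ_iff_lt_or_eq.mp h2
  exacts [hv j h1 h, hL]

section Hierarchy

variable {k : ℕ} (H : KLevelHierarchy V k)

theorem klevel_spec (v : V) :
    (1 ≤ klevel H v ∧ klevel H v < k ∧ v ∈ H.L (klevel H v)) ∨ klevel H v = k :=
  Nat.sInf_mem (s := {i | (1 ≤ i ∧ i < k ∧ v ∈ H.L i) ∨ i = k}) ⟨k, Or.inr rfl⟩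

theorem one_le_klevel (v : V) : 1 ≤ klevel H v := by
  have := H.two_le
  rcases klevel_spec H v with h | h <;> omega

theorem klevel_le (v : V) : klevel H v ≤ k := Nat.sInf_le (Or.inr rfl)

theorem klevel_eq_of_mem {i : ℕ} {v : V} (h1 : 1 ≤ i) (hik : i < k) (hv : v ∈ H.L i) :
    klevel H v = i := by
  refine le_antisymm (Nat.sInf_le (Or.inl ⟨h1, hik, hv⟩) : klevel H v ≤ i) ?_
  rcases klevel_spec H v with h | h
  · by_contra! hlt
    exact H.disj _ i h.1 h.2.1 h1 hik hlt.ne v h.2.2 hv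
  · omega

theorem le_klevel_of_mem_VsetOf {i : ℕ} {v : V} (hik : i ≤ k) (hv : v ∈ VsetOf H.L i) :
    i ≤ klevel H v := by
  rcases klevel_spec H v with h | h
  · by_contra! hlt
    exact hv _ h.1 hlt h.2.2
  · omega

theorem mem_VsetOf_of_adj {i : ℕ} (h1 : 1 ≤ i) (hik : i ≤ k) {a b : V}
    (hab : Adj (H.w i) a b) : a ∈ VsetOf H.L i ∧ b ∈ VsetOf H.L i := by
  by_contra h
  exact hab.2.ne (H.supported i h1 hik a b (by tauto))

theorem weight_succ_eq {i : ℕ} (h1 : 1 ≤ i) (hik : i < k) {a b : V} (hab : a ≠ b)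
    (ha : a ∈ VsetOf H.L (i + 1)) (hb : b ∈ VsetOf H.L (i + 1)) :
    H.w (i + 1) a b = min (H.w i a b) (⨅ x ∈ H.L i, H.w i a x + H.w i x b) := by
  simpa using H.aug (i + 1) (by omega) hik a b hab ha hb

theorem wdist_succ_le_weight {i : ℕ} (h1 : 1 ≤ i) (hik : i < k) {a b : V}
    (ha : a ∈ VsetOf H.L (i + 1)) (hb : b ∈ VsetOf H.L (i + 1)) :
    wdist (H.w (i + 1)) a b ≤ H.w i a b := by
  obtain rfl | hab := eq_or_ne a b
  · simp
  calc wdist (H.w (i + 1)) a b ≤ H.w (i + 1) a b := wdist_le_weight a b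
    _ ≤ H.w i a b := by rw [weight_succ_eq H h1 hik hab ha hb]; exact min_le_left _ _

theorem wdist_succ_le_weight_add {i : ℕ} (h1 : 1 ≤ i) (hik : i < k) {a b x : V}
    (ha : a ∈ VsetOf H.L (i + 1)) (hb : b ∈ VsetOf H.L (i + 1)) (hx : x ∈ H.L i) :
    wdist (H.w (i + 1)) a b ≤ H.w i a x + H.w i x b := by
  obtain rfl | hab := eq_or_ne a b
  · simp
  calc wdist (H.w (i + 1)) a b ≤ H.w (i + 1) a b := wdist_le_weight a b
    _ ≤ H.w i a x + H.w i x b := by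
      rw [weight_succ_eq H h1 hik hab ha hb]
      exact (min_le_right _ _).trans (iInf₂_le x hx)

theorem wdist_one_le_weight {i : ℕ} (h1 : 1 ≤ i) (hik : i ≤ k) (a b : V) :
    wdist (H.w 1) a b ≤ H.w i a b := by
  induction i, h1 using Nat.le_induction generalizing a b with
  | base => exact wdist_le_weight a b
  | succ i h1 ih =>
    obtain rfl | hab := eq_or_ne a b
    · simp
    by_cases hV : a ∈ VsetOf H.L (i + 1) ∧ b ∈ VsetOf H.L (i + 1)
    · rw [weight_succ_eq H h1 hik hab hV.1 hV.2]
      refine le_min (ih (by omega) a b) (le_iInf₂ fun x _ => ?_)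
      exact (wdist_triangle a x b).trans (add_le_add (ih (by omega) a x) (ih (by omega) x b))
    · rw [H.supported (i + 1) (by omega) hik a b (by tauto)]
      exact le_top

theorem wdist_succ_le_pathLen {i : ℕ} (h1 : 1 ≤ i) (hik : i < k) :
    ∀ {u v : V} {p : List V}, u ∈ VsetOf H.L (i + 1) → v ∈ VsetOf H.L (i + 1) →
      IsWalk (H.w i) u v p → wdist (H.w (i + 1)) u v ≤ pathLen (H.w i) p
  | _, _, [], _, _, hp => absurd rfl hp.1
  | _, _, [_], _, _, hp => by
      obtain ⟨rfl, rfl⟩ := IsChainBetween.eq_of_singleton hp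
      simp
  | _, v, a :: b :: l, ha, hv, hp => by
      obtain ⟨rfl, hab, hp⟩ := IsChainBetween.of_cons_cons hp
      by_cases hbL : b ∈ H.L i
      · -- `b` was eliminated: skip it using the augmenting edge between its two neighbours
        match l, hp with
        | [], hp =>
          obtain ⟨-, rfl⟩ := IsChainBetween.eq_of_singleton hp
          exact absurd hbL (hv i h1 i.lt_succ_self)
        | c :: l, hp =>
          obtain ⟨-, hbc, hp⟩ := IsChainBetween.of_cons_cons hp
          have hc : c ∈ VsetOf H.L (i + 1) :=
            mem_VsetOf_succ (mem_VsetOf_of_adj H h1 hik.le hbc).2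
              fun hcL => H.indep i h1 hik b hbL c hcL hbc
          calc wdist (H.w (i + 1)) a v
              ≤ wdist (H.w (i + 1)) a c + wdist (H.w (i + 1)) c v := wdist_triangle a c v
            _ ≤ (H.w i a b + H.w i b c) + pathLen (H.w i) (c :: l) :=
              add_le_add (wdist_succ_le_weight_add H h1 hik ha hc hbL)
                (wdist_succ_le_pathLen h1 hik hc hv hp)
            _ = pathLen (H.w i) (a :: b :: c :: l) := by
              rw [pathLen_cons_cons, pathLen_cons_cons, add_assoc]
      · have hb : b ∈ VsetOf H.L (i + 1) :=
          mem_VsetOf_succ (mem_VsetOf_of_adj H h1 hik.le hab).2 hbL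
        calc wdist (H.w (i + 1)) a v
            ≤ wdist (H.w (i + 1)) a b + wdist (H.w (i + 1)) b v := wdist_triangle a b v
          _ ≤ H.w i a b + pathLen (H.w i) (b :: l) :=
            add_le_add (wdist_succ_le_weight H h1 hik ha hb)
              (wdist_succ_le_pathLen h1 hik hb hv hp)
          _ = pathLen (H.w i) (a :: b :: l) := (pathLen_cons_cons _ a b l).symm

theorem kAncDist_le_pathLen {v u : V} {p : List V} (h : kIsAscending H v u p) :
    kAncDist H v u ≤ pathLen (fun a b => H.w (klevel H a) a b) p :=
  iInf_le (fun q : {p // kIsAscending H v u p} =>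
    pathLen (fun a b => H.w (klevel H a) a b) q.1) ⟨p, h⟩

theorem mem_kAnc_self (v : V) : v ∈ kAnc H v := ⟨[v], IsChainBetween.singleton _ v⟩

@[simp] theorem kAncDist_self (v : V) : kAncDist H v v = 0 :=
  nonpos_iff_eq_zero.mp (kAncDist_le_pathLen H (IsChainBetween.singleton _ v))

theorem mem_kAnc_of_kAscStep {a b u : V} (h : kAscStep H a b) (hu : u ∈ kAnc H b) :
    u ∈ kAnc H a :=
  let ⟨p, hp⟩ := hu
  ⟨a :: p, IsChainBetween.cons h hp⟩

theorem kAncDist_le_add_of_kAscStep {a b u : V} (h : kAscStep H a b) :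
    kAncDist H a u ≤ H.w (klevel H a) a b + kAncDist H b u := by
  unfold kAncDist
  rw [ENat.add_iInf]
  exact le_iInf fun p => iInf_le_of_le ⟨a :: p.1, IsChainBetween.cons h p.2⟩
    (pathLen_cons_of_head?_eq _ p.2.2.1).le

theorem wdist_one_le_kAncDist (v u : V) : wdist (H.w 1) v u ≤ kAncDist H v u :=
  le_iInf fun p => wdist_le_pathLen_of_chain
    (fun a b _ => wdist_one_le_weight H (one_le_klevel H a) (klevel_le H a) a b) p.2

theorem kAscStep_of_mem {i : ℕ} (h1 : 1 ≤ i) (hik : i < k) {u u' : V} (hu : u ∈ H.L i)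
    (hadj : Adj (H.w i) u u') : kAscStep H u u' := by
  have hu' : u' ∈ VsetOf H.L (i + 1) :=
    mem_VsetOf_succ (mem_VsetOf_of_adj H h1 hik.le hadj).2
      fun hu'L => H.indep i h1 hik u hu u' hu'L hadj
  rw [kAscStep, klevel_eq_of_mem H h1 hik hu]
  exact ⟨le_klevel_of_mem_VsetOf H hik hu', hadj⟩

noncomputable def queryDist (s t : V) : ℕ∞ :=
  min (⨅ x ∈ kAnc H s ∩ kAnc H t, kAncDist H s x + kAncDist H t x)
    (⨅ x ∈ kAnc H s ∩ VsetOf H.L k, ⨅ y ∈ kAnc H t ∩ VsetOf H.L k,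
      kAncDist H s x + wdist (H.w k) x y + kAncDist H t y)

theorem queryDist_comm (s t : V) : queryDist H s t = queryDist H t s := by
  have hsym := (H.wgraph k (by have := H.two_le; omega) le_rfl).1
  unfold queryDist
  congr 1
  · simp only [Set.inter_comm (kAnc H s), add_comm (kAncDist H s _)]
  · rw [iInf₂_comm]
    simp only [wdist_comm hsym, add_comm, add_left_comm]

@[simp] theorem queryDist_self (v : V) : queryDist H v v = 0 :=
  nonpos_iff_eq_zero.mp <| (min_le_left _ _).trans <|
    (iInf₂_le v ⟨mem_kAnc_self H v, mem_kAnc_self H v⟩).trans_eq (by simp)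

theorem queryDist_le_wdist_top {u v : V} (hu : u ∈ VsetOf H.L k) (hv : v ∈ VsetOf H.L k) :
    queryDist H u v ≤ wdist (H.w k) u v :=
  (min_le_right _ _).trans <| (iInf₂_le u ⟨mem_kAnc_self H u, hu⟩).trans <|
    (iInf₂_le v ⟨mem_kAnc_self H v, hv⟩).trans_eq (by simp)

theorem queryDist_le_add_of_kAscStep {u u' v : V} (h : kAscStep H u u') :
    queryDist H u v ≤ H.w (klevel H u) u u' + queryDist H u' v := by
  unfold queryDist
  rw [← min_add_add_left, ENat.add_iInf₂, ENat.add_iInf₂]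
  refine min_le_min (le_iInf₂ fun x hx => ?_) (le_iInf₂ fun x hx => ?_)
  · refine iInf₂_le_of_le x ⟨mem_kAnc_of_kAscStep H h hx.1, hx.2⟩ ?_
    rw [← add_assoc]
    exact add_le_add_left (kAncDist_le_add_of_kAscStep H h) _
  · refine iInf₂_le_of_le x ⟨mem_kAnc_of_kAscStep H h hx.1, hx.2⟩ ?_
    rw [ENat.add_iInf₂]
    refine iInf₂_mono fun y _ => ?_
    rw [← add_assoc, ← add_assoc]
    exact add_le_add_left (add_le_add_left (kAncDist_le_add_of_kAscStep H h) _) _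

theorem queryDist_le_pathLen_of_le_wdist_succ {i : ℕ} (h1 : 1 ≤ i) (hik : i < k)
    (ih : ∀ u v, u ∈ VsetOf H.L (i + 1) → v ∈ VsetOf H.L (i + 1) →
      queryDist H u v ≤ wdist (H.w (i + 1)) u v) {u v : V} {p : List V}
    (hu : u ∈ VsetOf H.L i) (hv : v ∈ VsetOf H.L i) (hp : IsWalk (H.w i) u v p) :
    queryDist H u v ≤ pathLen (H.w i) p := by
  induction hn : p.length using Nat.strong_induction_on generalizing u v p with
  | _ n ihn =>
  have hsym := (H.wgraph i h1 hik.le).1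
  -- a walk leaving an eliminated vertex starts with an ascending step
  have peel : ∀ {u v : V} {p : List V}, p.length = n → v ∈ VsetOf H.L i → u ∈ H.L i →
      IsWalk (H.w i) u v p → queryDist H u v ≤ pathLen (H.w i) p := by
    intro u v p hn hv hu hp
    match p, hp with
    | [], hp => exact absurd rfl hp.1
    | [_], hp =>
      obtain ⟨rfl, rfl⟩ := IsChainBetween.eq_of_singleton hp
      simp
    | a :: b :: l, hp =>
      obtain ⟨rfl, hab, hp⟩ := IsChainBetween.of_cons_cons hp
      have hb := (mem_VsetOf_of_adj H h1 hik.le hab).2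
      calc queryDist H a v ≤ H.w i a b + queryDist H b v := by
            simpa [klevel_eq_of_mem H h1 hik hu] using
              queryDist_le_add_of_kAscStep H (v := v) (kAscStep_of_mem H h1 hik hu hab)
        _ ≤ H.w i a b + pathLen (H.w i) (b :: l) :=
            add_le_add_right (ihn _ (by simp [← hn]) hb hv hp rfl) _
        _ = pathLen (H.w i) (a :: b :: l) := (pathLen_cons_cons _ a b l).symm
  by_cases huL : u ∈ H.L i
  · exact peel hn hv huL hp
  by_cases hvL : v ∈ H.L i
  · rw [queryDist_comm, ← pathLen_reverse _ hsym]
    exact peel (by simpa using hn) hu hvL (hp.reverse hsym)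
  have hu' := mem_VsetOf_succ hu huL
  have hv' := mem_VsetOf_succ hv hvL
  exact (ih u v hu' hv').trans (wdist_succ_le_pathLen H h1 hik hu' hv' hp)

theorem queryDist_le_wdist {i : ℕ} (h1 : 1 ≤ i) (hik : i ≤ k) {u v : V}
    (hu : u ∈ VsetOf H.L i) (hv : v ∈ VsetOf H.L i) :
    queryDist H u v ≤ wdist (H.w i) u v := by
  induction hik using Nat.decreasingInduction generalizing u v with
  | self => exact queryDist_le_wdist_top H hu hv
  | of_succ i hik ih =>
    exact le_wdist fun p hp => queryDist_le_pathLen_of_le_wdist_succ H h1 hik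
      (fun _ _ hu hv => ih (by omega) hu hv) hu hv hp

theorem wdist_one_le_queryDist (s t : V) : wdist (H.w 1) s t ≤ queryDist H s t := by
  have h1k : 1 ≤ k := one_le_two.trans H.two_le
  have hsym := (H.wgraph 1 le_rfl h1k).1
  have hwk : ∀ x y, wdist (H.w 1) x y ≤ wdist (H.w k) x y :=
    wdist_le_wdist fun a b _ => wdist_one_le_weight H h1k le_rfl a b
  refine le_min (le_iInf₂ fun x _ => ?_) (le_iInf₂ fun x _ => le_iInf₂ fun y _ => ?_)
  · calc wdist (H.w 1) s t ≤ wdist (H.w 1) s x + wdist (H.w 1) x t := wdist_triangle s x t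
      _ ≤ kAncDist H s x + kAncDist H t x := by
        rw [wdist_comm hsym x t]
        exact add_le_add (wdist_one_le_kAncDist H s x) (wdist_one_le_kAncDist H t x)
  · calc wdist (H.w 1) s t
        ≤ wdist (H.w 1) s x + wdist (H.w 1) x y + wdist (H.w 1) y t :=
          (wdist_triangle s y t).trans
            (add_le_add_left (wdist_triangle s x y) _)
      _ ≤ kAncDist H s x + wdist (H.w k) x y + kAncDist H t y := by
        rw [wdist_comm hsym y t]
        exact add_le_add (add_le_add (wdist_one_le_kAncDist H s x) (hwk x y))
          (wdist_one_le_kAncDist H t y)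

end Hierarchy

theorem klevel_query_min_general {k : ℕ} (H : KLevelHierarchy V k)
    (s t : V) :
    wdist (H.w 1) s t =
      min (⨅ x ∈ kAnc H s ∩ kAnc H t, (kAncDist H s x + kAncDist H t x))
        (⨅ x ∈ kAnc H s ∩ VsetOf H.L k, ⨅ y ∈ kAnc H t ∩ VsetOf H.L k,
          (kAncDist H s x + wdist (H.w k) x y + kAncDist H t y)) :=
  (wdist_one_le_queryDist H s t).antisymm <|
    queryDist_le_wdist H le_rfl (one_le_two.trans H.two_le)
      (mem_VsetOf_one H.L s) (mem_VsetOf_one H.L t)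

/-- in a `k`-level vertex hierarchy the distance is the minimum of
the pure-label term and the term going through the top-level graph `G_k`. -/
theorem klevel_query_min [Fintype V] {k : ℕ} (H : KLevelHierarchy V k)
    (s t : V) :
    wdist (H.w 1) s t =
      min (⨅ x ∈ kAnc H s ∩ kAnc H t, (kAncDist H s x + kAncDist H t x))
        (⨅ x ∈ kAnc H s ∩ VsetOf H.L k, ⨅ y ∈ kAnc H t ∩ VsetOf H.L k,
          (kAncDist H s x + wdist (H.w k) x y + kAncDist H t y)) :=
  klevel_query_min_general H s t

end ISLabel
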